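/- Fix integers n ≥ 1 and 1 ≤ k ≤ n. Let w_S : ℂ∖{0} → ℝ, indexed by the k-element subsets S of ℤ/(n+1)ℤ, be twice continuously differentiable functions satisfying equation (Gr), condition (I), and condition (II') with a family v_{i,j} : ℂ∖{0} → ℝ. Define w_i = ½ v_{i,−1−i} for i ∈ ℤ/(n+1)ℤ. Then w_i + w_{−1−i} = 0 for all i, and the w_i satisfy the tt*-Toda equation: for every i ∈ ℤ/(n+1)ℤ and every z ∈ ℂ∖{0}, ¼ Δw_i(z) = exp(w_i(z) − w_{i−1}(z)) − exp(w_{i+1}(z) − w_i(z)), where i±1 are taken in ℤ/(n+1)ℤ and Δ is the Euclidean Laplacian on ℂ ≅ ℝ². -/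

import Mathlib

open scoped BigOperators

/-- The Euclidean Laplacian `Δf = ∂²f/∂x² + ∂²f/∂y²` of `f : ℂ → ℝ`. -/
noncomputable def laplacianR (f : ℂ → ℝ) (z : ℂ) : ℝ :=
  fderiv ℝ (fun w => fderiv ℝ f w 1) z 1
    + fderiv ℝ (fun w => fderiv ℝ f w Complex.I) z Complex.I

/-- `w_i = ½ v_{i,−1−i}`. -/
noncomputable def todaComponent (n : ℕ) (v : ZMod (n + 1) → ZMod (n + 1) → ℂ → ℝ)
    (i : ZMod (n + 1)) (z : ℂ) : ℝ :=
  v i (-1 - i) z / 2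

/-!
Condition (II') makes `v` a cocycle: `v a b = w (R ∪ {a}) - w (R ∪ {b})` for every `(k-1)`-set
`R` avoiding `a` and `b`, and together with (I) it gives `v a b = v (-1-b) (-1-a)`. Hence
`w_{i+1} - w_i = v_{i+1,i}`, and the right-hand side of (Gr) telescopes to
`∑ s ∈ S, (exp v_{s,s-1} - exp v_{s+1,s})`, which is additive in `S`. Since
`2 w_i = w_{R ∪ {i}} - w_{R ∪ {-1-i}}`, the Laplacian of `w_i` is half the difference of two
such sums; only the terms at `s = i` and `s = -1-i` survive, and they are opposite by the
symmetry of `v`.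
-/

open Finset Filter Topology Laplacian InnerProductSpace

theorem laplacianR_eq_laplacian {f : ℂ → ℝ} {z : ℂ} (hf : ContDiffAt ℝ 2 f z) :
    laplacianR f z = Δ f z := by
  have hd : DifferentiableAt ℝ (fderiv ℝ f) z :=
    (hf.fderiv_right (m := 1) (by norm_num)).differentiableAt one_ne_zero
  simp [laplacian_eq_iteratedFDeriv_complexPlane, laplacianR, iteratedFDeriv_two_apply,
    fderiv_clm_apply hd (differentiableAt_const _)]

theorem laplacianR_eq_sub_div {f g h : ℂ → ℝ} {z : ℂ} (c : ℝ) (hg : ContDiffAt ℝ 2 g z)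
    (hh : ContDiffAt ℝ 2 h z) (hf : f =ᶠ[𝓝 z] fun ζ => (g ζ - h ζ) / c) :
    laplacianR f z = (laplacianR g z - laplacianR h z) / c := by
  have hf' : f =ᶠ[𝓝 z] c⁻¹ • (g - h) := hf.trans (.of_eq (by ext; simp [div_eq_inv_mul]))
  have hgh : ContDiffAt ℝ 2 (c⁻¹ • (g - h)) z := (hg.sub hh).const_smul c⁻¹
  rw [laplacianR_eq_laplacian (hgh.congr_of_eventuallyEq hf'), laplacianR_eq_laplacian hg,
    laplacianR_eq_laplacian hh, (laplacian_congr_nhds hf').eq_of_nhds,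
    laplacian_smul (f := g - h) _ (hg.sub hh), hg.laplacian_sub hh, smul_eq_mul, div_eq_inv_mul]

theorem Finset.exists_card_eq_disjoint {α : Type*} [Fintype α] [DecidableEq α] (s : Finset α)
    {m : ℕ} (h : m + #s ≤ Fintype.card α) : ∃ R : Finset α, #R = m ∧ Disjoint R s := by
  obtain ⟨R, hRs, hR⟩ := exists_subset_card_eq (s := sᶜ) (n := m) (by rw [card_compl]; omega)
  exact ⟨R, hR, subset_compl_iff_disjoint_right.mp hRs⟩

theorem Finset.exists_card_add_one_eq_notMem_notMem {α : Type*} [Fintype α] [DecidableEq α]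
    {k : ℕ} (hk : 1 ≤ k) (hkα : k + 1 ≤ Fintype.card α) (a b : α) :
    ∃ R : Finset α, #R + 1 = k ∧ a ∉ R ∧ b ∉ R := by
  obtain ⟨R, hR, hdisj⟩ := exists_card_eq_disjoint {a, b} (m := k - 1)
    (by have := card_le_two (a := a) (b := b); omega)
  simp only [disjoint_insert_right, disjoint_singleton_right] at hdisj
  exact ⟨R, by omega, hdisj⟩

theorem Finset.sum_filter_sub_one_notMem_sub_sum_filter_add_one_notMem {G M : Type*}
    [AddGroupWithOne G] [DecidableEq G] [AddCommGroup M] (S : Finset G) (f : G → M) :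
    ∑ i ∈ S with i - 1 ∉ S, f (i - 1) - ∑ i ∈ S with i + 1 ∉ S, f i
      = ∑ i ∈ S, (f (i - 1) - f i) := by
  have hinner : ∑ i ∈ S with i - 1 ∈ S, f (i - 1) = ∑ i ∈ S with i + 1 ∈ S, f i :=
    sum_nbij' (· - 1) (· + 1) (by simp +contextual) (by simp +contextual) (by simp) (by simp)
      (by simp)
  rw [sum_sub_distrib, ← sum_filter_not_add_sum_filter S (fun i => i - 1 ∉ S),
    ← sum_filter_not_add_sum_filter S (fun i => i + 1 ∉ S)]
  simp only [not_not, hinner]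
  abel

/-- Condition (II') of the paper at a single point. -/
def IsExchangeDifference {α : Type*} [DecidableEq α] (k : ℕ) (w : Finset α → ℝ)
    (v : α → α → ℝ) : Prop :=
  ∀ (S T : Finset α) (i j : α), #S = k → #T = k → i ∈ S → j ∈ T → S.erase i = T.erase j →
    w S = w T + v i j

namespace IsExchangeDifference

variable {α : Type*} [DecidableEq α] {k : ℕ} {w : Finset α → ℝ} {v : α → α → ℝ}

theorem eq_sub_insert (h : IsExchangeDifference k w v) {R : Finset α} {a b : α}
    (hR : #R + 1 = k) (ha : a ∉ R) (hb : b ∉ R) : v a b = w (insert a R) - w (insert b R) := by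
  have := h (insert a R) (insert b R) a b (by rw [card_insert_of_notMem ha, hR])
    (by rw [card_insert_of_notMem hb, hR]) (mem_insert_self a R) (mem_insert_self b R)
    (by rw [erase_insert ha, erase_insert hb])
  linarith

theorem eq_sub_insert_erase (h : IsExchangeDifference k w v) {S : Finset α} {i j : α}
    (hS : #S = k) (hi : i ∈ S) (hj : j ∉ S) : v i j = w S - w (insert j (S.erase i)) := by
  have hR : #(S.erase i) + 1 = k := by rw [card_erase_add_one hi, hS]
  rw [h.eq_sub_insert hR (notMem_erase i S) (fun hj' => hj (mem_of_mem_erase hj')),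
    insert_erase hi]

variable [Fintype α]

theorem apply_self (h : IsExchangeDifference k w v) (hk : 1 ≤ k) (hkα : k + 1 ≤ Fintype.card α)
    (a : α) : v a a = 0 := by
  obtain ⟨R, hR, ha, -⟩ := exists_card_add_one_eq_notMem_notMem hk hkα a a
  rw [h.eq_sub_insert hR ha ha, sub_self]

theorem swap_eq_neg (h : IsExchangeDifference k w v) (hk : 1 ≤ k)
    (hkα : k + 1 ≤ Fintype.card α) (a b : α) : v b a = -v a b := by
  obtain ⟨R, hR, ha, hb⟩ := exists_card_add_one_eq_notMem_notMem hk hkα a b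
  rw [h.eq_sub_insert hR ha hb, h.eq_sub_insert hR hb ha, neg_sub]

theorem eq_sub_erase_univ (h : IsExchangeDifference k w v) (hk : 1 ≤ k)
    (hkα : k + 1 = Fintype.card α) (a b : α) :
    v a b = w (univ.erase b) - w (univ.erase a) := by
  rcases eq_or_ne a b with rfl | hab
  · rw [h.apply_self hk hkα.le, sub_self]
  have hR : #({a, b}ᶜ : Finset α) + 1 = k := by rw [card_compl, card_pair hab]; omega
  have hins : ∀ x y : α, x ≠ y → insert x ({x, y}ᶜ : Finset α) = univ.erase y := fun x y hxy => by
    ext t; by_cases t = x <;> simp_all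
  rw [h.eq_sub_insert hR (by simp) (by simp), hins a b hab, pair_comm, hins b a hab.symm]

theorem cocycle (h : IsExchangeDifference k w v) (hk : 1 ≤ k) (hkα : k + 1 ≤ Fintype.card α)
    (a b c : α) : v a b + v b c = v a c := by
  rcases hkα.lt_or_eq with hkα | hkα
  · obtain ⟨R, hR, hdisj⟩ := exists_card_eq_disjoint {a, b, c} (m := k - 1)
      (by have := card_le_three (a := a) (b := b) (c := c); omega)
    simp only [disjoint_insert_right, disjoint_singleton_right] at hdisj
    obtain ⟨ha, hb, hc⟩ := hdisj
    rw [h.eq_sub_insert (by omega) ha hb, h.eq_sub_insert (by omega) hb hc,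
      h.eq_sub_insert (by omega) ha hc]
    ring
  · rw [h.eq_sub_erase_univ hk hkα, h.eq_sub_erase_univ hk hkα, h.eq_sub_erase_univ hk hkα]
    ring

theorem apply_apply_eq_of_image {ν : α → α} (h : IsExchangeDifference k w v)
    (hν : Function.Injective ν) (hI : ∀ S : Finset α, #S = k → w S + w (S.image ν) = 0)
    (hk : 1 ≤ k) (hkα : k + 1 ≤ Fintype.card α) (a b : α) : v (ν b) (ν a) = v a b := by
  obtain ⟨R, hR, ha, hb⟩ := exists_card_add_one_eq_notMem_notMem hk hkα a b
  have hνR : #(R.image ν) + 1 = k := by rw [card_image_of_injective R hν, hR]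
  have hnotMem : ∀ {x}, x ∉ R → ν x ∉ R.image ν := fun hx => by rwa [hν.mem_finset_image]
  have hIa := hI (insert a R) (by rw [card_insert_of_notMem ha, hR])
  have hIb := hI (insert b R) (by rw [card_insert_of_notMem hb, hR])
  rw [image_insert] at hIa hIb
  rw [h.eq_sub_insert hνR (hnotMem hb) (hnotMem ha), h.eq_sub_insert hR ha hb]
  linarith

end IsExchangeDifference

section Gr

variable {G : Type*} [AddGroupWithOne G] [DecidableEq G]

noncomputable def grRHS (w : Finset G → ℝ) (S : Finset G) : ℝ :=
  (∑ i ∈ S with i - 1 ∉ S, Real.exp (w S - w (insert (i - 1) (S.erase i))))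
    - ∑ i ∈ S with i + 1 ∉ S, Real.exp (w (insert (i + 1) (S.erase i)) - w S)

noncomputable def grTerm (v : G → G → ℝ) (s : G) : ℝ :=
  Real.exp (v s (s - 1)) - Real.exp (v (s + 1) s)

theorem IsExchangeDifference.grRHS_eq_sum_grTerm [Fintype G] {k : ℕ} {w : Finset G → ℝ}
    {v : G → G → ℝ} (h : IsExchangeDifference k w v) (hk : 1 ≤ k)
    (hkG : k + 1 ≤ Fintype.card G) {S : Finset G} (hS : #S = k) :
    grRHS w S = ∑ s ∈ S, grTerm v s := by
  have htel := sum_filter_sub_one_notMem_sub_sum_filter_add_one_notMem S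
    (fun j => Real.exp (v (j + 1) j))
  simp only [sub_add_cancel] at htel
  unfold grTerm
  rw [grRHS, ← htel]
  congr 1 <;> refine sum_congr rfl fun i hi => ?_ <;> rw [mem_filter] at hi
  · rw [h.eq_sub_insert_erase hS hi.1 hi.2]
  · rw [← neg_sub, ← h.eq_sub_insert_erase hS hi.1 hi.2, h.swap_eq_neg hk hkG, neg_neg]

end Gr

theorem grTerm_neg_one_sub {G : Type*} [AddCommGroupWithOne G] {v : G → G → ℝ}
    (hv : ∀ a b, v (-1 - b) (-1 - a) = v a b) (s : G) :
    grTerm v (-1 - s) = -grTerm v s := by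
  rw [grTerm, grTerm, ← hv s (s - 1), ← hv (s + 1) s]
  abel_nf

section Toda

variable {n : ℕ} {v : ZMod (n + 1) → ZMod (n + 1) → ℂ → ℝ} {z : ℂ}

theorem todaComponent_add_todaComponent_neg_one_sub (hv : ∀ a b, v b a z = -v a b z)
    (i : ZMod (n + 1)) : todaComponent n v i z + todaComponent n v (-1 - i) z = 0 := by
  rw [todaComponent, todaComponent, sub_sub_cancel, hv]
  ring

theorem todaComponent_add_one_sub_todaComponent
    (hcoc : ∀ a b c, v a b z + v b c z = v a c z)
    (hsym : ∀ a b, v (-1 - b) (-1 - a) z = v a b z) (i : ZMod (n + 1)) :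
    todaComponent n v (i + 1) z - todaComponent n v i z = v (i + 1) i z := by
  have h₁ := hcoc (i + 1) i (-1 - (i + 1))
  have h₂ := hcoc i (-1 - i) (-1 - (i + 1))
  have h₃ := hsym (i + 1) i
  simp only [todaComponent]
  linarith

theorem grTerm_eq_toda (hcoc : ∀ a b c, v a b z + v b c z = v a c z)
    (hsym : ∀ a b, v (-1 - b) (-1 - a) z = v a b z) (i : ZMod (n + 1)) :
    grTerm (v · · z) i
      = Real.exp (todaComponent n v i z - todaComponent n v (i - 1) z)
        - Real.exp (todaComponent n v (i + 1) z - todaComponent n v i z) := by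
  have h := todaComponent_add_one_sub_todaComponent hcoc hsym (i - 1)
  rw [sub_add_cancel] at h
  rw [grTerm, h, todaComponent_add_one_sub_todaComponent hcoc hsym]

end Toda

theorem toda_from_Gr_general (n k : ℕ) (hk1 : 1 ≤ k) (hk2 : k ≤ n)
    (w : Finset (ZMod (n + 1)) → ℂ → ℝ)
    (v : ZMod (n + 1) → ZMod (n + 1) → ℂ → ℝ)
    (hsm : ∀ S : Finset (ZMod (n + 1)), S.card = k →
        ContDiffOn ℝ 2 (w S) {(0 : ℂ)}ᶜ)
    (hGr : ∀ S : Finset (ZMod (n + 1)), S.card = k → ∀ z : ℂ, z ≠ 0 →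
        (1 / 4 : ℝ) * laplacianR (w S) z
          = (∑ i ∈ S.filter (fun i => i - 1 ∉ S),
              Real.exp (w S z - w (insert (i - 1) (S.erase i)) z))
            - ∑ i ∈ S.filter (fun i => i + 1 ∉ S),
              Real.exp (w (insert (i + 1) (S.erase i)) z - w S z))
    (hI : ∀ S : Finset (ZMod (n + 1)), S.card = k → ∀ z : ℂ, z ≠ 0 →
        w S z + w (S.image fun i => -1 - i) z = 0)
    (hII : ∀ (S T : Finset (ZMod (n + 1))) (i j : ZMod (n + 1)),
        S.card = k → T.card = k → i ∈ S → j ∈ T → S.erase i = T.erase j →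
        ∀ z : ℂ, z ≠ 0 → w S z = w T z + v i j z) :
    (∀ i : ZMod (n + 1), ∀ z : ℂ, z ≠ 0 →
        todaComponent n v i z + todaComponent n v (-1 - i) z = 0)
    ∧ (∀ i : ZMod (n + 1), ∀ z : ℂ, z ≠ 0 →
        (1 / 4 : ℝ) * laplacianR (todaComponent n v i) z
          = Real.exp (todaComponent n v i z - todaComponent n v (i - 1) z)
            - Real.exp (todaComponent n v (i + 1) z - todaComponent n v i z)) := by
  have hkG : k + 1 ≤ Fintype.card (ZMod (n + 1)) := by rw [ZMod.card]; omega
  have hE : ∀ z ≠ 0, IsExchangeDifference k (w · z) (v · · z) :=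
    fun z hz S T i j hS hT hi hj hST => hII S T i j hS hT hi hj hST z hz
  have hsym : ∀ z ≠ 0, ∀ a b, v (-1 - b) (-1 - a) z = v a b z := fun z hz =>
    (hE z hz).apply_apply_eq_of_image (sub_right_injective (b := -1))
      (fun S hS => hI S hS z hz) hk1 hkG
  refine ⟨fun i z hz => todaComponent_add_todaComponent_neg_one_sub
    ((hE z hz).swap_eq_neg hk1 hkG) i, fun i z hz => ?_⟩
  obtain ⟨R, hR, hi, hνi⟩ := exists_card_add_one_eq_notMem_notMem hk1 hkG i (-1 - i)
  have hC2 : ∀ a ∉ R, ContDiffAt ℝ 2 (w (insert a R)) z := fun a ha =>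
    (hsm _ (by rw [card_insert_of_notMem ha, hR])).contDiffAt (isOpen_compl_singleton.mem_nhds hz)
  have hlap : ∀ a ∉ R, (1 / 4 : ℝ) * laplacianR (w (insert a R)) z
      = grTerm (v · · z) a + ∑ s ∈ R, grTerm (v · · z) s := fun a ha => by
    rw [hGr _ (by rw [card_insert_of_notMem ha, hR]) z hz]
    exact ((hE z hz).grRHS_eq_sum_grTerm hk1 hkG (by rw [card_insert_of_notMem ha, hR])).trans
      (sum_insert ha)
  have hloc : todaComponent n v i =ᶠ[𝓝 z]
      fun ζ => (w (insert i R) ζ - w (insert (-1 - i) R) ζ) / 2 := by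
    filter_upwards [isOpen_ne.mem_nhds hz] with ζ hζ
    rw [todaComponent, (hE ζ hζ).eq_sub_insert hR hi hνi]
  rw [laplacianR_eq_sub_div 2 (hC2 i hi) (hC2 _ hνi) hloc, ← grTerm_eq_toda (fun a b c =>
    (hE z hz).cocycle hk1 hkG a b c) (hsym z hz)]
  linear_combination (hlap i hi - hlap _ hνi) / 2
    - grTerm_neg_one_sub (v := (v · · z)) (hsym z hz) i / 2

/-- **Proposition 4.2 of the paper.**  If `w_S : ℂ∖{0} → ℝ`, indexed by `k`-element
subsets of `ℤ/(n+1)ℤ`, are `C²` and satisfy equation (Gr), condition (I), and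
condition (II') with family `v_{i,j}`, then the functions `w_i = ½ v_{i,−1−i}`
satisfy `w_i + w_{−1−i} = 0` and the tt*-Toda equation. -/
theorem toda_from_Gr (n k : ℕ) (hn : 1 ≤ n) (hk1 : 1 ≤ k) (hk2 : k ≤ n)
    (w : Finset (ZMod (n + 1)) → ℂ → ℝ)
    (v : ZMod (n + 1) → ZMod (n + 1) → ℂ → ℝ)
    (hsm : ∀ S : Finset (ZMod (n + 1)), S.card = k →
        ContDiffOn ℝ 2 (w S) {(0 : ℂ)}ᶜ)
    (hGr : ∀ S : Finset (ZMod (n + 1)), S.card = k → ∀ z : ℂ, z ≠ 0 →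
        (1 / 4 : ℝ) * laplacianR (w S) z
          = (∑ i ∈ S.filter (fun i => i - 1 ∉ S),
              Real.exp (w S z - w (insert (i - 1) (S.erase i)) z))
            - ∑ i ∈ S.filter (fun i => i + 1 ∉ S),
              Real.exp (w (insert (i + 1) (S.erase i)) z - w S z))
    (hI : ∀ S : Finset (ZMod (n + 1)), S.card = k → ∀ z : ℂ, z ≠ 0 →
        w S z + w (S.image fun i => -1 - i) z = 0)
    (hII : ∀ (S T : Finset (ZMod (n + 1))) (i j : ZMod (n + 1)),
        S.card = k → T.card = k → i ∈ S → j ∈ T → S.erase i = T.erase j →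
        ∀ z : ℂ, z ≠ 0 → w S z = w T z + v i j z) :
    (∀ i : ZMod (n + 1), ∀ z : ℂ, z ≠ 0 →
        todaComponent n v i z + todaComponent n v (-1 - i) z = 0)
    ∧ (∀ i : ZMod (n + 1), ∀ z : ℂ, z ≠ 0 →
        (1 / 4 : ℝ) * laplacianR (todaComponent n v i) z
          = Real.exp (todaComponent n v i z - todaComponent n v (i - 1) z)
            - Real.exp (todaComponent n v (i + 1) z - todaComponent n v i z)) :=
  toda_from_Gr_general n k hk1 hk2 w v hsm hGr hI hII
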